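/- Fix ρ ∈ (0,1) and c ∈ (0,1]. Define h_{c,ρ}(l) = 2 c l² Φ(−(l/2)√(c/(1−ρ))) for l ≥ 0. If l̂ is the unique maximizer of h_{1,0}(l) = 2 l² Φ(−l/2) on [0,∞) and l̂_{c,ρ} the unique maximizer of h_{c,ρ}, then l̂_{c,ρ} = √((1−ρ)/c) · l̂ and h_{c,ρ}(l̂_{c,ρ}) = (1−ρ) h_{1,0}(l̂). In particular, the ratio of the optimal speed to the independent case depends only on ρ (equal to 1−ρ) and not on c. -/
import Mathlib


open Real Set Filter MeasureTheory ProbabilityTheory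

/-- Standard normal cumulative distribution function. -/
noncomputable def Phi (x : ℝ) : ℝ := ∫ t in Set.Iic x, Real.exp (-t^2/2) / Real.sqrt (2*Real.pi)

/-- Speed of the limiting diffusion for RWM-within-Gibbs on the exchangeable normal target:
h_{c,ρ}(l) = 2 c l² Φ(−(l/2)√(c/(1−ρ))). -/
noncomputable def hSpeed (ρ c l : ℝ) : ℝ := 2 * c * l^2 * Phi (-(l/2) * Real.sqrt (c/(1-ρ)))

theorem stmt17 (ρ c : ℝ) (hρ : ρ ∈ Set.Ioo (0:ℝ) 1) (hc : c ∈ Set.Ioc (0:ℝ) 1)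
    (lhat lcρ : ℝ) (hlhat : lhat ∈ Set.Ici (0:ℝ))
    (hmax1 : IsMaxOn (hSpeed 0 1) (Set.Ici 0) lhat)
    (huniq1 : ∀ l ∈ Set.Ici (0:ℝ), IsMaxOn (hSpeed 0 1) (Set.Ici 0) l → l = lhat)
    (hlcρ : lcρ ∈ Set.Ici (0:ℝ))
    (hmaxc : IsMaxOn (hSpeed ρ c) (Set.Ici 0) lcρ)
    (huniqc : ∀ l ∈ Set.Ici (0:ℝ), IsMaxOn (hSpeed ρ c) (Set.Ici 0) l → l = lcρ) :
    lcρ = Real.sqrt ((1-ρ)/c) * lhat ∧ hSpeed ρ c lcρ = (1-ρ) * hSpeed 0 1 lhat := by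
  obtain ⟨hρ0, hρ1⟩ := hρ
  obtain ⟨hc0, hc1⟩ := hc
  have h1ρ : (0:ℝ) < 1 - ρ := by linarith
  set k : ℝ := Real.sqrt (c / (1 - ρ)) with hk
  have hkpos : 0 < k := Real.sqrt_pos.mpr (by positivity)
  have hksq : k ^ 2 = c / (1 - ρ) := Real.sq_sqrt (by positivity)
  have hkinv : Real.sqrt ((1 - ρ) / c) = k⁻¹ := by
    rw [hk, ← Real.sqrt_inv, inv_div]
  -- scaling identity
  have key : ∀ l : ℝ, hSpeed ρ c l = (1 - ρ) * hSpeed 0 1 (k * l) := by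
    intro l
    simp only [hSpeed]
    have h1 : Real.sqrt ((1:ℝ) / (1 - 0)) = 1 := by norm_num
    have harg : -(k * l / 2) * Real.sqrt ((1:ℝ) / (1 - 0)) = -(l / 2) * k := by
      rw [h1]; ring
    rw [harg, mul_pow, hksq]
    have hnum : (1 - ρ) * (2 * 1 * (c / (1 - ρ) * l ^ 2)) = 2 * c * l ^ 2 := by
      field_simp
    generalize Phi (-(l / 2) * k) = P
    rw [← hnum]; ring
  have hmem : k⁻¹ * lhat ∈ Set.Ici (0:ℝ) := by
    have := hlhat
    simp only [Set.mem_Ici] at this ⊢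
    positivity
  have hmax : IsMaxOn (hSpeed ρ c) (Set.Ici 0) (k⁻¹ * lhat) := by
    intro l hl
    simp only [Set.mem_Ici] at hl
    have h1 : hSpeed ρ c l = (1 - ρ) * hSpeed 0 1 (k * l) := key l
    have h2 : hSpeed ρ c (k⁻¹ * lhat) = (1 - ρ) * hSpeed 0 1 lhat := by
      have hkk : k * (k⁻¹ * lhat) = lhat := by
        field_simp
      rw [key, hkk]
    have h3 : hSpeed 0 1 (k * l) ≤ hSpeed 0 1 lhat := by
      apply hmax1
      simp only [Set.mem_Ici]
      positivity
    simp only [Set.mem_setOf_eq]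
    rw [h1, h2]
    exact mul_le_mul_of_nonneg_left h3 (le_of_lt h1ρ)
  have heq : lcρ = k⁻¹ * lhat := by
    rw [huniqc (k⁻¹ * lhat) hmem hmax]
  constructor
  · rw [hkinv]; exact heq
  · have hkk : k * (k⁻¹ * lhat) = lhat := by field_simp
    rw [heq, key, hkk]
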